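/- For all nonnegative integers l, r, t, b with l + r = m and t + b = n (m, n positive integers): (C(l,2)+C(r,2))·(C(t,2)+C(b,2)) ≥ ⌊m/2⌋·⌊(m-1)/2⌋·⌊n/2⌋·⌊(n-1)/2⌋, with equality when |l - r| ≤ 1 and |t - b| ≤ 1. -/
import Mathlib

lemma two_choose (x : ℕ) : 2 * x.choose 2 + x = x * x := by
  induction x with
  | zero => rfl
  | succ j ih =>
    rw [Nat.choose_succ_succ, Nat.choose_one_right]
    ring_nf; ring_nf at ih; omega

lemma key (l r : ℕ) :
    l.choose 2 + r.choose 2 ≥ ((l+r)/2) * ((l+r-1)/2) ∧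
    (((l : ℤ) - r).natAbs ≤ 1 →
      l.choose 2 + r.choose 2 = ((l+r)/2) * ((l+r-1)/2)) := by
  have hl := two_choose l
  have hr := two_choose r
  zify at hl hr
  rcases Nat.even_or_odd (l + r) with ⟨k, hk⟩ | ⟨k, hk⟩
  · have h1 : (l+r)/2 = k := by omega
    have h2 : (l+r-1)/2 = k - 1 := by omega
    rw [h1, h2]
    rcases k with _ | j
    · have : l = 0 ∧ r = 0 := by omega
      simp [this.1, this.2]
    · simp only [Nat.succ_sub_one]
      have hk' : (l:ℤ) + r = 2*(j+1) := by omega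
      constructor
      · zify
        nlinarith [sq_nonneg ((l:ℤ) - r)]
      · intro h
        have hlr : l = j+1 ∧ r = j+1 := by omega
        obtain ⟨hL, hR⟩ := hlr
        subst hL hR
        zify
        nlinarith
  · have h1 : (l+r)/2 = k := by omega
    have h2 : (l+r-1)/2 = k := by omega
    rw [h1, h2]
    have hk' : (l:ℤ) + r = 2*k + 1 := by omega
    have hd : (l:ℤ) - r ≤ -1 ∨ 1 ≤ (l:ℤ) - r := by omega
    constructor
    · zify
      rcases hd with hd | hd
      · nlinarith [sq_nonneg ((l:ℤ) - r + 1)]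
      · nlinarith [sq_nonneg ((l:ℤ) - r - 1)]
    · intro h
      have hlr : (l = k ∧ r = k+1) ∨ (l = k+1 ∧ r = k) := by omega
      rcases hlr with ⟨hL, hR⟩ | ⟨hL, hR⟩ <;> subst hL hR <;> zify <;> nlinarith
theorem stmt_10 (m n : ℕ) (hm : 0 < m) (hn : 0 < n) (l r t b : ℕ)
    (hlr : l + r = m) (htb : t + b = n) :
    (l.choose 2 + r.choose 2) * (t.choose 2 + b.choose 2) ≥
      (m / 2) * ((m - 1) / 2) * ((n / 2) * ((n - 1) / 2)) ∧
    (((l : ℤ) - r).natAbs ≤ 1 → ((t : ℤ) - b).natAbs ≤ 1 →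
      (l.choose 2 + r.choose 2) * (t.choose 2 + b.choose 2) =
        (m / 2) * ((m - 1) / 2) * ((n / 2) * ((n - 1) / 2))) := by
  subst hlr htb
  obtain ⟨h1, h1e⟩ := key l r
  obtain ⟨h2, h2e⟩ := key t b
  exact ⟨Nat.mul_le_mul h1 h2, fun ha hb => by rw [h1e ha, h2e hb]⟩
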